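/- For real numbers q₁ ≠ q₂ and a fixed real parameter w, define the M₂(ℝ)⊗M₂(ℝ)-valued function a(q₁,q₂) = (1/(2(q₁−q₂)))·(−w·e₁₁⊗e₂₂ + e₁₂⊗e₂₁ − e₂₁⊗e₁₂ + w·e₂₂⊗e₁₁). For 1 ≤ j < k ≤ 3 let a_{jk} denote the operator on (ℝ²)^{⊗3} acting as a(q₁,q₂) on tensor factors j and k and as the identity on the remaining factor, and set a_{kj} = −a_{jk} (which agrees with conjugating a_{jk} by the flip of factors j and k, since a is antisymmetric under the flip). For k ∈ {1,2,3} and any differentiable matrix-valued function r of (q₁,q₂), define h_k∂r = (e₁₁ acting on factor k)·∂r/∂q₁ + (e₂₂ acting on factor k)·∂r/∂q₂. Then on the domain q₁ ≠ q₂: [a₁₂, a₁₃] + [a₁₂, a₂₃] + [a₃₂, a₁₃] + (1/2)·( h₃∂a₁₂ + h₁∂a₂₃ + h₂∂a₃₁ ) = 0. -/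

import Mathlib

open Matrix Kronecker

noncomputable section

/-- `2×2` real matrices. -/
abbrev M2 : Type := Matrix (Fin 2) (Fin 2) ℝ

/-- `M₂(ℝ) ⊗ M₂(ℝ)` realized via the Kronecker product. -/
abbrev M4 : Type := Matrix (Fin 2 × Fin 2) (Fin 2 × Fin 2) ℝ

/-- Operators on `(ℝ²)^{⊗3}`, realized as matrices indexed by triples. -/
abbrev M8 : Type := Matrix (Fin 2 × Fin 2 × Fin 2) (Fin 2 × Fin 2 × Fin 2) ℝ

/-- The `2×2` elementary matrix `e_{ij}` (indices `0,1` for `1,2`). -/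
def E (i j : Fin 2) : M2 := Matrix.single i j 1

/-- The dynamical `a`-matrix of the second Poisson structure of the `N = 2`
rational Calogero–Moser model, with gauge parameter `w`:
`a(q₁,q₂) = (1/(2(q₁−q₂)))·(−w e₁₁⊗e₂₂ + e₁₂⊗e₂₁ − e₂₁⊗e₁₂ + w e₂₂⊗e₁₁)`. -/
def aMat (w q₁ q₂ : ℝ) : M4 :=
  (1 / (2 * (q₁ - q₂))) •
    (-(w • (E 0 0 ⊗ₖ E 1 1)) + E 0 1 ⊗ₖ E 1 0 - E 1 0 ⊗ₖ E 0 1 + w • (E 1 1 ⊗ₖ E 0 0))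

/-- Place a matrix of `M₂(ℝ)⊗M₂(ℝ)` on tensor factors 1 and 2 of `(ℝ²)^{⊗3}`,
acting as identity on factor 3. -/
def place12 (r : M4) : M8 :=
  Matrix.of fun i j => r (i.1, i.2.1) (j.1, j.2.1) * (if i.2.2 = j.2.2 then 1 else 0)

/-- Place a matrix of `M₂(ℝ)⊗M₂(ℝ)` on tensor factors 1 and 3 of `(ℝ²)^{⊗3}`,
acting as identity on factor 2. -/
def place13 (r : M4) : M8 :=
  Matrix.of fun i j => r (i.1, i.2.2) (j.1, j.2.2) * (if i.2.1 = j.2.1 then 1 else 0)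

/-- Place a matrix of `M₂(ℝ)⊗M₂(ℝ)` on tensor factors 2 and 3 of `(ℝ²)^{⊗3}`,
acting as identity on factor 1. -/
def place23 (r : M4) : M8 :=
  Matrix.of fun i j => r (i.2.1, i.2.2) (j.2.1, j.2.2) * (if i.1 = j.1 then 1 else 0)

/-- A `2×2` matrix acting on tensor factor 1 of `(ℝ²)^{⊗3}`. -/
def fac1 (m : M2) : M8 :=
  Matrix.of fun i j => m i.1 j.1 * (if i.2 = j.2 then 1 else 0)

/-- A `2×2` matrix acting on tensor factor 2 of `(ℝ²)^{⊗3}`. -/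
def fac2 (m : M2) : M8 :=
  Matrix.of fun i j => m i.2.1 j.2.1 * (if (i.1, i.2.2) = (j.1, j.2.2) then 1 else 0)

/-- A `2×2` matrix acting on tensor factor 3 of `(ℝ²)^{⊗3}`. -/
def fac3 (m : M2) : M8 :=
  Matrix.of fun i j => m i.2.2 j.2.2 * (if (i.1, i.2.1) = (j.1, j.2.1) then 1 else 0)

/-- Entrywise partial derivative in the first variable `q₁`. -/
def pd1 (f : ℝ → ℝ → M8) (q₁ q₂ : ℝ) : M8 :=
  Matrix.of fun i j => deriv (fun t => f t q₂ i j) q₁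

/-- Entrywise partial derivative in the second variable `q₂`. -/
def pd2 (f : ℝ → ℝ → M8) (q₁ q₂ : ℝ) : M8 :=
  Matrix.of fun i j => deriv (fun t => f q₁ t i j) q₂

/-- `h₁∂r = (e₁₁ on factor 1)·∂r/∂q₁ + (e₂₂ on factor 1)·∂r/∂q₂`. -/
def hd1 (f : ℝ → ℝ → M8) (q₁ q₂ : ℝ) : M8 :=
  fac1 (E 0 0) * pd1 f q₁ q₂ + fac1 (E 1 1) * pd2 f q₁ q₂

/-- `h₂∂r = (e₁₁ on factor 2)·∂r/∂q₁ + (e₂₂ on factor 2)·∂r/∂q₂`. -/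
def hd2 (f : ℝ → ℝ → M8) (q₁ q₂ : ℝ) : M8 :=
  fac2 (E 0 0) * pd1 f q₁ q₂ + fac2 (E 1 1) * pd2 f q₁ q₂

/-- `h₃∂r = (e₁₁ on factor 3)·∂r/∂q₁ + (e₂₂ on factor 3)·∂r/∂q₂`. -/
def hd3 (f : ℝ → ℝ → M8) (q₁ q₂ : ℝ) : M8 :=
  fac3 (E 0 0) * pd1 f q₁ q₂ + fac3 (E 1 1) * pd2 f q₁ q₂

/-- `a₁₂` as a function of the dynamical variables. -/
def a12 (w : ℝ) : ℝ → ℝ → M8 := fun q₁ q₂ => place12 (aMat w q₁ q₂)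

/-- `a₁₃` as a function of the dynamical variables. -/
def a13 (w : ℝ) : ℝ → ℝ → M8 := fun q₁ q₂ => place13 (aMat w q₁ q₂)

/-- `a₂₃` as a function of the dynamical variables. -/
def a23 (w : ℝ) : ℝ → ℝ → M8 := fun q₁ q₂ => place23 (aMat w q₁ q₂)

/-- `a₃₂ = −a₂₃`. -/
def a32 (w : ℝ) : ℝ → ℝ → M8 := fun q₁ q₂ => -a23 w q₁ q₂

/-- `a₃₁ = −a₁₃`. -/
def a31 (w : ℝ) : ℝ → ℝ → M8 := fun q₁ q₂ => -a13 w q₁ q₂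

/-!
Write `a(q₁,q₂) = c • G` with `c = 1/(2(q₁−q₂))` and `G = w • D + K`, where `D` and `K` are
constant matrices with integer entries. The brackets then contribute `c² • CYB(G)`, and since
`∂₁c = −∂₂c = −2c²`, the derivative terms `h_k∂` contribute `−c² • (H₃G₁₂ + H₁G₂₃ − H₂G₁₃)`
with `H = e₁₁ − e₂₂`. What remains is the identity `CYB(G) = H₃G₁₂ + H₁G₂₃ − H₂G₁₃` of constant
matrices. It is quadratic in `w`, and its three coefficients are finite identities between
integer matrices, so it holds over every commutative ring.
-/

namespace Matrix

variable {ι κ τ R S : Type*} [DecidableEq τ]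

/-- `r` acting on the coordinates `π` and as the identity on the coordinates `σ`; when
`i ↦ (π i, σ i)` is a bijection `ι ≃ κ × τ` this is `r ⊗ₖ 1` reindexed. -/
def placeAlong [CommRing R] (π : ι → κ) (σ : ι → τ) : Matrix κ κ R →ₗ[R] Matrix ι ι R where
  toFun r := of fun i j => r (π i) (π j) * if σ i = σ j then 1 else 0
  map_add' r s := by ext; simp only [of_apply, add_apply, add_mul]
  map_smul' c r := by
    ext; simp only [of_apply, smul_apply, smul_eq_mul, RingHom.id_apply, mul_assoc]

theorem placeAlong_map [CommRing R] [CommRing S] (f : R →+* S) (π : ι → κ) (σ : ι → τ)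
    (r : Matrix κ κ R) : placeAlong π σ (r.map f) = (placeAlong π σ r).map f := by
  ext i j
  simp [placeAlong, apply_ite f]

end Matrix

namespace CalogeroMoser

open Matrix

variable {R S : Type*} [CommRing R] [CommRing S]

/-! `place12`, …, `fac3` are these maps at `R = ℝ`, definitionally. -/

abbrev onFactors12 : Matrix (Fin 2 × Fin 2) (Fin 2 × Fin 2) R →ₗ[R]
    Matrix (Fin 2 × Fin 2 × Fin 2) (Fin 2 × Fin 2 × Fin 2) R :=
  placeAlong (fun i => (i.1, i.2.1)) (fun i => i.2.2)

abbrev onFactors13 : Matrix (Fin 2 × Fin 2) (Fin 2 × Fin 2) R →ₗ[R]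
    Matrix (Fin 2 × Fin 2 × Fin 2) (Fin 2 × Fin 2 × Fin 2) R :=
  placeAlong (fun i => (i.1, i.2.2)) (fun i => i.2.1)

abbrev onFactors23 : Matrix (Fin 2 × Fin 2) (Fin 2 × Fin 2) R →ₗ[R]
    Matrix (Fin 2 × Fin 2 × Fin 2) (Fin 2 × Fin 2 × Fin 2) R :=
  placeAlong (fun i => (i.2.1, i.2.2)) (fun i => i.1)

abbrev onFactor1 : Matrix (Fin 2) (Fin 2) R →ₗ[R]
    Matrix (Fin 2 × Fin 2 × Fin 2) (Fin 2 × Fin 2 × Fin 2) R :=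
  placeAlong (fun i => i.1) (fun i => i.2)

abbrev onFactor2 : Matrix (Fin 2) (Fin 2) R →ₗ[R]
    Matrix (Fin 2 × Fin 2 × Fin 2) (Fin 2 × Fin 2 × Fin 2) R :=
  placeAlong (fun i => i.2.1) (fun i => (i.1, i.2.2))

abbrev onFactor3 : Matrix (Fin 2) (Fin 2) R →ₗ[R]
    Matrix (Fin 2 × Fin 2 × Fin 2) (Fin 2 × Fin 2 × Fin 2) R :=
  placeAlong (fun i => i.2.2) (fun i => (i.1, i.2.1))

def cartanH : Matrix (Fin 2) (Fin 2) R := single 0 0 1 - single 1 1 1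

def gaugePart : Matrix (Fin 2 × Fin 2) (Fin 2 × Fin 2) R :=
  single 1 1 1 ⊗ₖ single 0 0 1 - single 0 0 1 ⊗ₖ single 1 1 1

def exchangePart : Matrix (Fin 2 × Fin 2) (Fin 2 × Fin 2) R :=
  single 0 1 1 ⊗ₖ single 1 0 1 - single 1 0 1 ⊗ₖ single 0 1 1

def cybeTerm (X Y : Matrix (Fin 2 × Fin 2) (Fin 2 × Fin 2) R) :
    Matrix (Fin 2 × Fin 2 × Fin 2) (Fin 2 × Fin 2 × Fin 2) R :=
  ⁅onFactors12 X, onFactors13 Y⁆ + ⁅onFactors12 X, onFactors23 Y⁆ + ⁅onFactors13 X, onFactors23 Y⁆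

def cartanTerm (X : Matrix (Fin 2 × Fin 2) (Fin 2 × Fin 2) R) :
    Matrix (Fin 2 × Fin 2 × Fin 2) (Fin 2 × Fin 2 × Fin 2) R :=
  onFactor3 cartanH * onFactors12 X + onFactor1 cartanH * onFactors23 X
    - onFactor2 cartanH * onFactors13 X

theorem cybeTerm_map (f : R →+* S) (X Y : Matrix (Fin 2 × Fin 2) (Fin 2 × Fin 2) R) :
    cybeTerm (X.map f) (Y.map f) = (cybeTerm X Y).map f := by
  simp only [cybeTerm, Ring.lie_def, Matrix.map_add _ (map_add f), Matrix.map_sub _ (map_sub f),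
    Matrix.map_mul, placeAlong_map]

theorem cartanH_map (f : R →+* S) : (cartanH : Matrix (Fin 2) (Fin 2) R).map f = cartanH := by
  simp [cartanH, Matrix.map_sub, map_single]

theorem cartanTerm_map (f : R →+* S) (X : Matrix (Fin 2 × Fin 2) (Fin 2 × Fin 2) R) :
    cartanTerm (X.map f) = (cartanTerm X).map f := by
  simp only [cartanTerm, Matrix.map_add _ (map_add f), Matrix.map_sub _ (map_sub f),
    Matrix.map_mul, ← placeAlong_map, cartanH_map]

theorem gaugePart_map (f : R →+* S) :
    (gaugePart : Matrix (Fin 2 × Fin 2) (Fin 2 × Fin 2) R).map f = gaugePart := by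
  simp [gaugePart, single_kronecker_single, Matrix.map_sub, map_single]

theorem exchangePart_map (f : R →+* S) :
    (exchangePart : Matrix (Fin 2 × Fin 2) (Fin 2 × Fin 2) R).map f = exchangePart := by
  simp [exchangePart, single_kronecker_single, Matrix.map_sub, map_single]

/-! The coefficient identities are decided over `ℤ` and transported along `ℤ → R`. -/

theorem cybeTerm_gaugePart :
    cybeTerm (gaugePart : Matrix (Fin 2 × Fin 2) (Fin 2 × Fin 2) R) gaugePart = 0 := by
  have h := congrArg (Matrix.map · (Int.castRingHom R))
    (show cybeTerm (gaugePart : Matrix (Fin 2 × Fin 2) (Fin 2 × Fin 2) ℤ) gaugePart = 0 by decide)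
  rwa [← cybeTerm_map, gaugePart_map, Matrix.map_zero _ (map_zero _)] at h

theorem cybeTerm_gaugePart_exchangePart :
    cybeTerm (gaugePart : Matrix (Fin 2 × Fin 2) (Fin 2 × Fin 2) R) exchangePart
      + cybeTerm exchangePart gaugePart = cartanTerm gaugePart := by
  have h := congrArg (Matrix.map · (Int.castRingHom R))
    (show cybeTerm (gaugePart : Matrix (Fin 2 × Fin 2) (Fin 2 × Fin 2) ℤ) exchangePart
      + cybeTerm exchangePart gaugePart = cartanTerm gaugePart by decide)
  simpa only [Matrix.map_add _ (map_add _), ← cybeTerm_map, ← cartanTerm_map, gaugePart_map,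
    exchangePart_map] using h

theorem cybeTerm_exchangePart :
    cybeTerm (exchangePart : Matrix (Fin 2 × Fin 2) (Fin 2 × Fin 2) R) exchangePart
      = cartanTerm exchangePart := by
  have h := congrArg (Matrix.map · (Int.castRingHom R))
    (show cybeTerm (exchangePart : Matrix (Fin 2 × Fin 2) (Fin 2 × Fin 2) ℤ) exchangePart
      = cartanTerm exchangePart by decide)
  simpa only [← cybeTerm_map, ← cartanTerm_map, exchangePart_map] using h

def aNumerator (w : R) : Matrix (Fin 2 × Fin 2) (Fin 2 × Fin 2) R := w • gaugePart + exchangePart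

theorem cybeTerm_aNumerator (w : R) :
    cybeTerm (aNumerator w) (aNumerator w) = cartanTerm (aNumerator w) := by
  have hexpand : cybeTerm (aNumerator w) (aNumerator w) = w ^ 2 • cybeTerm gaugePart gaugePart
      + w • (cybeTerm gaugePart exchangePart + cybeTerm exchangePart gaugePart)
      + cybeTerm exchangePart exchangePart := by
    simp only [aNumerator, cybeTerm, Ring.lie_def, map_add, map_smul, mul_add, add_mul,
      smul_mul_assoc, mul_smul_comm]
    module
  have hlinear :
      cartanTerm (aNumerator w) = w • cartanTerm gaugePart + cartanTerm exchangePart := by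
    simp only [aNumerator, cartanTerm, map_add, map_smul, mul_add, mul_smul_comm]
    module
  rw [hexpand, hlinear, cybeTerm_gaugePart, cybeTerm_gaugePart_exchangePart, cybeTerm_exchangePart,
    smul_zero, zero_add]

theorem aMat_eq (w q₁ q₂ : ℝ) : aMat w q₁ q₂ = (1 / (2 * (q₁ - q₂))) • aNumerator w := by
  rw [aMat, aNumerator, gaugePart, exchangePart]
  unfold E
  module

theorem hasDerivAt_one_div_two_mul_sub_left {q₁ q₂ : ℝ} (hq : q₁ ≠ q₂) :
    HasDerivAt (fun t => 1 / (2 * (t - q₂))) (-2 * (1 / (2 * (q₁ - q₂))) ^ 2) q₁ := by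
  have h : HasDerivAt (fun t => 2 * (t - q₂)) 2 q₁ := by
    simpa using ((hasDerivAt_id q₁).sub_const q₂).const_mul 2
  simp only [one_div]
  exact (h.inv (mul_ne_zero two_ne_zero (sub_ne_zero.mpr hq))).congr_deriv (by rw [inv_pow]; ring)

theorem hasDerivAt_one_div_two_mul_sub_right {q₁ q₂ : ℝ} (hq : q₁ ≠ q₂) :
    HasDerivAt (fun t => 1 / (2 * (q₁ - t))) (2 * (1 / (2 * (q₁ - q₂))) ^ 2) q₂ := by
  have h : HasDerivAt (fun t => 2 * (q₁ - t)) (-2) q₂ := by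
    simpa using ((hasDerivAt_id q₂).const_sub q₁).const_mul 2
  simp only [one_div]
  exact (h.inv (mul_ne_zero two_ne_zero (sub_ne_zero.mpr hq))).congr_deriv (by rw [inv_pow]; ring)

theorem pd1_smul_const {f : ℝ → ℝ → ℝ} {f' q₁ q₂ : ℝ} (hf : HasDerivAt (fun t => f t q₂) f' q₁)
    (M : M8) : pd1 (fun t s => f t s • M) q₁ q₂ = f' • M := by
  ext i j
  exact (hf.mul_const (M i j)).deriv

theorem pd2_smul_const {f : ℝ → ℝ → ℝ} {f' q₁ q₂ : ℝ} (hf : HasDerivAt (fun t => f q₁ t) f' q₂)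
    (M : M8) : pd2 (fun t s => f t s • M) q₁ q₂ = f' • M := by
  ext i j
  exact (hf.mul_const (M i j)).deriv

theorem cartanDeriv_one_div_two_mul_sub_smul {q₁ q₂ : ℝ} (hq : q₁ ≠ q₂)
    (F : Matrix (Fin 2) (Fin 2) ℝ →ₗ[ℝ] M8) (M : M8) :
    F (E 0 0) * pd1 (fun t s => (1 / (2 * (t - s))) • M) q₁ q₂
      + F (E 1 1) * pd2 (fun t s => (1 / (2 * (t - s))) • M) q₁ q₂
      = (-2 * (1 / (2 * (q₁ - q₂))) ^ 2) • (F cartanH * M) := by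
  rw [pd1_smul_const (hasDerivAt_one_div_two_mul_sub_left hq),
    pd2_smul_const (hasDerivAt_one_div_two_mul_sub_right hq), cartanH, map_sub, sub_mul,
    mul_smul_comm, mul_smul_comm]
  unfold E
  module

theorem hd1_one_div_two_mul_sub_smul {q₁ q₂ : ℝ} (hq : q₁ ≠ q₂) (M : M8) :
    hd1 (fun t s => (1 / (2 * (t - s))) • M) q₁ q₂
      = (-2 * (1 / (2 * (q₁ - q₂))) ^ 2) • (onFactor1 cartanH * M) :=
  cartanDeriv_one_div_two_mul_sub_smul hq onFactor1 M

theorem hd2_one_div_two_mul_sub_smul {q₁ q₂ : ℝ} (hq : q₁ ≠ q₂) (M : M8) :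
    hd2 (fun t s => (1 / (2 * (t - s))) • M) q₁ q₂
      = (-2 * (1 / (2 * (q₁ - q₂))) ^ 2) • (onFactor2 cartanH * M) :=
  cartanDeriv_one_div_two_mul_sub_smul hq onFactor2 M

theorem hd3_one_div_two_mul_sub_smul {q₁ q₂ : ℝ} (hq : q₁ ≠ q₂) (M : M8) :
    hd3 (fun t s => (1 / (2 * (t - s))) • M) q₁ q₂
      = (-2 * (1 / (2 * (q₁ - q₂))) ^ 2) • (onFactor3 cartanH * M) :=
  cartanDeriv_one_div_two_mul_sub_smul hq onFactor3 M

theorem a12_eq (w : ℝ) : a12 w = fun t s => (1 / (2 * (t - s))) • onFactors12 (aNumerator w) := by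
  funext t s
  exact (congrArg onFactors12 (aMat_eq w t s)).trans (map_smul _ _ _)

theorem a13_eq (w : ℝ) : a13 w = fun t s => (1 / (2 * (t - s))) • onFactors13 (aNumerator w) := by
  funext t s
  exact (congrArg onFactors13 (aMat_eq w t s)).trans (map_smul _ _ _)

theorem a23_eq (w : ℝ) : a23 w = fun t s => (1 / (2 * (t - s))) • onFactors23 (aNumerator w) := by
  funext t s
  exact (congrArg onFactors23 (aMat_eq w t s)).trans (map_smul _ _ _)

theorem a31_eq (w : ℝ) : a31 w = fun t s => (1 / (2 * (t - s))) • -onFactors13 (aNumerator w) := by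
  funext t s
  rw [a31, a13_eq, smul_neg]

end CalogeroMoser

open CalogeroMoser

theorem stmt9 (w q₁ q₂ : ℝ) (hq : q₁ ≠ q₂) :
    (a12 w q₁ q₂ * a13 w q₁ q₂ - a13 w q₁ q₂ * a12 w q₁ q₂)
    + (a12 w q₁ q₂ * a23 w q₁ q₂ - a23 w q₁ q₂ * a12 w q₁ q₂)
    + (a32 w q₁ q₂ * a13 w q₁ q₂ - a13 w q₁ q₂ * a32 w q₁ q₂)
    + (1 / 2 : ℝ) • (hd3 (a12 w) q₁ q₂ + hd1 (a23 w) q₁ q₂ + hd2 (a31 w) q₁ q₂)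
    = 0 := by
  simp only [a32, a31_eq, a12_eq, a13_eq, a23_eq, hd1_one_div_two_mul_sub_smul hq,
    hd2_one_div_two_mul_sub_smul hq, hd3_one_div_two_mul_sub_smul hq]
  calc _ = (1 / (2 * (q₁ - q₂))) ^ 2 • (cybeTerm (aNumerator w) (aNumerator w)
          - cartanTerm (aNumerator w)) := by
        simp only [cybeTerm, cartanTerm, Ring.lie_def, smul_mul_assoc, mul_smul_comm, smul_smul,
          mul_neg, neg_mul]
        module
    _ = 0 := by rw [cybeTerm_aNumerator, sub_self, smul_zero]

end
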